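/- arXiv:2104.00128 — 3 statements merged into one kernel-verified Lean document; each statement's English description precedes it below -/
import Mathlib

section
/- Let φ(x,y) = (x^s − y^r)^k P(x,y) with r, s ≥ 2, k ≥ 2. Then, after factoring (x^s − y^r)^{2k−4} out of det D²φ, the constant term (coefficient of (x^s − y^r)^0) in the remaining expression vanishes, and the coefficient of (x^s − y^r)^1 equals (k−1) k² r s y^{r−2} x^{s−2} P(x,y)² (s x^s − r y^r − r s x^s + r s y^r). -/
noncomputable def pdx (f : ℝ → ℝ → ℝ) : ℝ → ℝ → ℝ := fun x y => deriv (fun t => f t y) x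
noncomputable def pdy (f : ℝ → ℝ → ℝ) : ℝ → ℝ → ℝ := fun x y => deriv (fun t => f x t) y
noncomputable def hessDet (f : ℝ → ℝ → ℝ) : ℝ → ℝ → ℝ :=
  fun x y => pdx (pdx f) x y * pdy (pdy f) x y - (pdy (pdx f) x y) ^ 2

/-!
Write `u = x ^ s - y ^ r`. Each second derivative of `u ^ k * P` is `u ^ (k - 2)` times a
quadratic polynomial in `u`, and the three constant terms `k (k - 1) P u_i u_j` form a rank-one
matrix, so the constant term of the Hessian determinant cancels. In the linear term every
contribution involving a first derivative of `P` cancels as well, leaving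
`k² (k - 1) P² (u_x² u_yy - 2 u_x u_y u_xy + u_y² u_xx)`; for `u = x ^ s - y ^ r` this is the
stated coefficient.
-/

theorem exists_quadratic_det_eq {A : Type*} [CommRing A] {a₂ b₂ c₂ : A} (h : a₂ * b₂ = c₂ ^ 2)
    (u a₁ a₀ b₁ b₀ c₁ c₀ : A) :
    ∃ Q : A, (a₂ + u * a₁ + u ^ 2 * a₀) * (b₂ + u * b₁ + u ^ 2 * b₀)
        - (c₂ + u * c₁ + u ^ 2 * c₀) ^ 2 = u * (a₂ * b₁ + a₁ * b₂ - 2 * c₂ * c₁) + u ^ 2 * Q :=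
  ⟨a₂ * b₀ + a₁ * b₁ + a₀ * b₂ - c₁ ^ 2 - 2 * c₂ * c₀
      + u * (a₁ * b₀ + a₀ * b₁ - 2 * c₁ * c₀) + u ^ 2 * (a₀ * b₀ - c₀ ^ 2),
    by linear_combination h⟩

namespace Derivation

variable {R A : Type*} [CommSemiring R] [CommRing A] [Algebra R A]

@[simp]
theorem map_ofNat (D : Derivation R A A) (n : ℕ) [n.AtLeastTwo] :
    D (no_index (OfNat.ofNat n : A)) = 0 :=
  D.map_natCast n

theorem map_pow_succ_mul (D : Derivation R A A) (u P : A) (k : ℕ) :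
    D (u ^ (k + 1) * P) = u ^ k * ((k + 1) * D u * P + u * D P) := by
  rw [D.leibniz, D.leibniz_pow]
  simp only [smul_eq_mul, nsmul_eq_mul, Nat.add_sub_cancel]
  push_cast
  ring

theorem map_map_pow_add_two_mul (D D' : Derivation R A A) (u P : A) (k : ℕ) :
    D' (D (u ^ (k + 2) * P)) =
      u ^ k * ((k + 2) * (k + 1) * D u * D' u * P
        + u * ((k + 2) * (D' (D u) * P + D u * D' P + D' u * D P)) + u ^ 2 * D' (D P)) := by
  rw [D.map_pow_succ_mul, D'.map_pow_succ_mul]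
  simp only [map_add, D'.leibniz, D'.map_natCast, D'.map_one_eq_zero, smul_eq_mul]
  push_cast
  ring

def hessianDet (D E : Derivation R A A) (f : A) : A :=
  D (D f) * E (E f) - E (D f) ^ 2

theorem exists_hessianDet_pow_add_two_mul (D E : Derivation R A A) (u P : A) (k : ℕ) :
    ∃ Q : A, hessianDet D E (u ^ (k + 2) * P) = u ^ (2 * k) * (u *
      ((k + 2) ^ 2 * (k + 1) * P ^ 2 *
        (D u ^ 2 * E (E u) - 2 * D u * E u * E (D u) + E u ^ 2 * D (D u))) + u ^ 2 * Q) := by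
  obtain ⟨Q, hQ⟩ := exists_quadratic_det_eq (a₂ := (k + 2) * (k + 1) * D u * D u * P)
    (b₂ := (k + 2) * (k + 1) * E u * E u * P) (c₂ := (k + 2) * (k + 1) * D u * E u * P) (by ring) u
    ((k + 2) * (D (D u) * P + D u * D P + D u * D P)) (D (D P))
    ((k + 2) * (E (E u) * P + E u * E P + E u * E P)) (E (E P))
    ((k + 2) * (E (D u) * P + D u * E P + E u * D P)) (E (D P))
  refine ⟨Q, ?_⟩
  rw [hessianDet, map_map_pow_add_two_mul, map_map_pow_add_two_mul, map_map_pow_add_two_mul]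
  linear_combination u ^ (2 * k) * hQ

end Derivation

namespace MvPolynomial

theorem hasDerivAt_eval_fst (Q : MvPolynomial (Fin 2) ℝ) (x y : ℝ) :
    HasDerivAt (fun t => eval ![t, y] Q) (eval ![x, y] (pderiv 0 Q)) x := by
  induction Q using MvPolynomial.induction_on with
  | C a => simpa using hasDerivAt_const x a
  | add p q hp hq => simpa using hp.fun_add hq
  | mul_X p i hp =>
    fin_cases i
    · simpa [pderiv_mul, mul_comm, add_comm] using hp.fun_mul (hasDerivAt_id x)
    · simpa [pderiv_mul, mul_comm] using hp.mul_const y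

theorem hasDerivAt_eval_snd (Q : MvPolynomial (Fin 2) ℝ) (x y : ℝ) :
    HasDerivAt (fun t => eval ![x, t] Q) (eval ![x, y] (pderiv 1 Q)) y := by
  induction Q using MvPolynomial.induction_on with
  | C a => simpa using hasDerivAt_const y a
  | add p q hp hq => simpa using hp.fun_add hq
  | mul_X p i hp =>
    fin_cases i
    · simpa [pderiv_mul, mul_comm] using hp.mul_const x
    · simpa [pderiv_mul, mul_comm, add_comm] using hp.fun_mul (hasDerivAt_id y)

theorem pdx_eval (Q : MvPolynomial (Fin 2) ℝ) :
    pdx (fun x y => eval ![x, y] Q) = fun x y => eval ![x, y] (pderiv 0 Q) :=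
  funext₂ fun x y => (hasDerivAt_eval_fst Q x y).deriv

theorem pdy_eval (Q : MvPolynomial (Fin 2) ℝ) :
    pdy (fun x y => eval ![x, y] Q) = fun x y => eval ![x, y] (pderiv 1 Q) :=
  funext₂ fun x y => (hasDerivAt_eval_snd Q x y).deriv

theorem hessDet_eval (Q : MvPolynomial (Fin 2) ℝ) (x y : ℝ) :
    hessDet (fun x y => eval ![x, y] Q) x y
      = eval ![x, y] ((pderiv 0).hessianDet (pderiv 1) Q) := by
  simp only [hessDet, pdx_eval, pdy_eval, Derivation.hessianDet, map_sub, map_mul, map_pow]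

end MvPolynomial

open MvPolynomial in
theorem hessian_det_expansion_in_curve_factor
    (k r s : ℕ) (hk : 2 ≤ k) (hr : 2 ≤ r) (hs : 2 ≤ s)
    (P : MvPolynomial (Fin 2) ℝ) :
    ∃ E2 : MvPolynomial (Fin 2) ℝ, ∀ x y : ℝ,
      hessDet (fun x y => (x ^ s - y ^ r) ^ k * eval ![x, y] P) x y
        = (x ^ s - y ^ r) ^ (2 * k - 4) *
            ((x ^ s - y ^ r) *
                (((k : ℝ) - 1) * (k : ℝ) ^ 2 * (r : ℝ) * (s : ℝ) * y ^ (r - 2) * x ^ (s - 2)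
                  * (eval ![x, y] P) ^ 2
                  * ((s : ℝ) * x ^ s - (r : ℝ) * y ^ r
                      - (r : ℝ) * (s : ℝ) * x ^ s + (r : ℝ) * (s : ℝ) * y ^ r))
              + (x ^ s - y ^ r) ^ 2 * eval ![x, y] E2) := by
  obtain ⟨k, rfl⟩ := Nat.exists_eq_add_of_le' hk
  obtain ⟨r, rfl⟩ := Nat.exists_eq_add_of_le' hr
  obtain ⟨s, rfl⟩ := Nat.exists_eq_add_of_le' hs
  set u : MvPolynomial (Fin 2) ℝ := X 0 ^ (s + 2) - X 1 ^ (r + 2)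
  have hux : pderiv 0 u = (s + 2 : MvPolynomial (Fin 2) ℝ) * X 0 ^ (s + 1) := by simp [u]
  have huy : pderiv 1 u = -((r + 2 : MvPolynomial (Fin 2) ℝ) * X 1 ^ (r + 1)) := by simp [u]
  have huxx : pderiv 0 (pderiv 0 u) = ((s + 2) * (s + 1) : MvPolynomial (Fin 2) ℝ) * X 0 ^ s := by
    simp [hux, mul_assoc]
  have huyy :
      pderiv 1 (pderiv 1 u) = -(((r + 2) * (r + 1) : MvPolynomial (Fin 2) ℝ) * X 1 ^ r) := by
    simp [huy, mul_assoc]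
  have huxy : pderiv 1 (pderiv 0 u) = 0 := by simp [hux]
  obtain ⟨Q, hQ⟩ := (pderiv 0).exists_hessianDet_pow_add_two_mul (pderiv 1) u P k
  refine ⟨Q, fun x y => ?_⟩
  have hφ : (fun x y : ℝ => (x ^ (s + 2) - y ^ (r + 2)) ^ (k + 2) * eval ![x, y] P)
      = fun x y => eval ![x, y] (u ^ (k + 2) * P) := by
    funext x y
    simp [u]
  rw [hφ, hessDet_eval, hQ, huxx, huyy, huxy, hux, huy, show 2 * (k + 2) - 4 = 2 * k by omega]
  simp only [u, map_mul, map_add, map_sub, map_neg, map_pow, map_natCast, map_ofNat, map_one,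
    map_zero, eval_X, Matrix.cons_val_zero, Matrix.cons_val_one, Nat.add_sub_cancel]
  push_cast
  congr 3
  ring
end

section
/- Every nonzero real mixed-homogeneous polynomial φ satisfying φ(x,y) = ρ^{-q} φ(ρ^r x, ρ^s y) for all ρ > 0 (with gcd(r,s)=1) admits an expansion φ(x,y) = x^{ν₁} y^{ν₂} (c₀ x^{ns} + c₁ x^{(n−1)s} y^r + c₂ x^{(n−2)s} y^{2r} + ⋯ + c_n y^{nr}) for some nonnegative integers ν₁, ν₂, n and real coefficients c₀, …, c_n. -/
open MvPolynomial Finset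

private lemma bind1_monomial_scale (u : Fin 2 → ℝ) (d : Fin 2 →₀ ℕ) (a : ℝ) :
    bind₁ (fun i : Fin 2 => C (u i) * X i) (monomial d a)
      = monomial d (a * d.prod fun i k => u i ^ k) := by
  rw [bind₁, aeval_monomial, monomial_eq]
  simp only [algebraMap_eq, Finsupp.prod, mul_pow, Finset.prod_mul_distrib, map_mul, map_prod,
    map_pow]
  ring

private lemma coeff_bind1_scale (u : Fin 2 → ℝ) (p : MvPolynomial (Fin 2) ℝ) (d : Fin 2 →₀ ℕ) :
    coeff d (bind₁ (fun i : Fin 2 => C (u i) * X i) p)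
      = (d.prod fun i k => u i ^ k) * coeff d p := by
  classical
  conv_lhs => rw [p.as_sum, map_sum]
  rw [MvPolynomial.coeff_sum]
  simp only [bind1_monomial_scale, coeff_monomial]
  rw [Finset.sum_ite_eq' p.support d]
  by_cases hd : d ∈ p.support
  · simp [hd, mul_comm]
  · simp [hd, (notMem_support_iff.mp hd)]

open MvPolynomial in
theorem mixed_homogeneous_expansion
    (q r s : ℕ) (hq : 0 < q) (hr : 0 < r) (hs : 0 < s) (hcop : Nat.Coprime r s)
    (p : MvPolynomial (Fin 2) ℝ) (hp : p ≠ 0)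
    (hhom : ∀ (x y ρ : ℝ), 0 < ρ →
      eval ![x, y] p = ρ ^ (-(q : ℤ)) * eval ![ρ ^ r * x, ρ ^ s * y] p) :
    ∃ (ν₁ ν₂ n : ℕ) (c : ℕ → ℝ),
      ∀ x y : ℝ,
        eval ![x, y] p
          = x ^ ν₁ * y ^ ν₂ *
              ∑ i ∈ Finset.range (n + 1), c i * x ^ ((n - i) * s) * y ^ (i * r) := by
  classical
  set w : Fin 2 → ℕ := ![r, s] with hw
  -- Step 1: the functional equation forces weighted homogeneity of the support.
  have hpoly : ∀ ρ : ℝ, 0 < ρ →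
      bind₁ (fun i : Fin 2 => C (ρ ^ w i) * X i) p = C (ρ ^ q) * p := by
    intro ρ hρ
    apply MvPolynomial.funext
    intro v
    have h1 : eval v (bind₁ (fun i : Fin 2 => C (ρ ^ w i) * X i) p)
        = eval (fun i => ρ ^ w i * v i) p := by
      show eval₂Hom (RingHom.id ℝ) v _ = _
      rw [eval₂Hom_bind₁]
      have hf : (fun i : Fin 2 => eval₂Hom (RingHom.id ℝ) v (C (ρ ^ w i) * X i))
          = fun i => ρ ^ w i * v i := by
        funext i; simp
      rw [hf]
      rfl
    have h2 : (fun i => ρ ^ w i * v i) = ![ρ ^ r * v 0, ρ ^ s * v 1] := by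
      funext i
      fin_cases i <;> simp [hw]
    have h3 : ![v 0, v 1] = v := by
      funext i; fin_cases i <;> rfl
    have h4 := hhom (v 0) (v 1) ρ hρ
    rw [h3] at h4
    have hρq : (0:ℝ) < ρ ^ q := pow_pos hρ q
    rw [h1, h2, map_mul, eval_C]
    rw [h4, zpow_neg, zpow_natCast]
    field_simp
  have key : ∀ d ∈ p.support, r * d 0 + s * d 1 = q := by
    intro d hd
    have h := congrArg (coeff d) (hpoly 2 (by norm_num))
    rw [coeff_bind1_scale, coeff_C_mul] at h
    have hprod : (d.prod fun i k => ((2:ℝ) ^ w i) ^ k) = (2:ℝ) ^ (r * d 0 + s * d 1) := by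
      rw [Finsupp.prod_fintype _ _ (fun i => pow_zero _), Fin.prod_univ_two]
      simp only [hw]
      norm_num [← pow_mul, ← pow_add]
    rw [hprod] at h
    have hc : coeff d p ≠ 0 := mem_support_iff.mp hd
    have h2 : (2:ℝ) ^ (r * d 0 + s * d 1) = (2:ℝ) ^ q :=
      mul_right_cancel₀ hc h
    have h3 : ((2 ^ (r * d 0 + s * d 1) : ℕ) : ℝ) = ((2 ^ q : ℕ) : ℝ) := by push_cast; exact h2
    exact Nat.pow_right_injective le_rfl (Nat.cast_injective h3)
  -- Step 2: structure of the support.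
  have hS : p.support.Nonempty := support_nonempty.mpr hp
  obtain ⟨da, hda, hmina⟩ := p.support.exists_min_image (fun d => d 0) hS
  obtain ⟨db, hdb, hminb⟩ := p.support.exists_min_image (fun d => d 1) hS
  set ν₁ : ℕ := da 0 with hν₁
  set ν₂ : ℕ := db 1 with hν₂
  have hcop' : IsCoprime (r : ℤ) (s : ℤ) := hcop.isCoprime
  -- divisibility facts
  have hdvd : ∀ d ∈ p.support, s ∣ d 0 - ν₁ ∧ r ∣ d 1 - ν₂ := by
    intro d hd
    have h1 : (r : ℤ) * d 0 + s * d 1 = q := by exact_mod_cast key d hd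
    have h2 : (r : ℤ) * da 0 + s * da 1 = q := by exact_mod_cast key da hda
    have h3 : (r : ℤ) * db 0 + s * db 1 = q := by exact_mod_cast key db hdb
    constructor
    · have hle : ν₁ ≤ d 0 := hmina d hd
      have : (s : ℤ) ∣ (d 0 : ℤ) - ν₁ := by
        have hdvd' : (s : ℤ) ∣ (r : ℤ) * ((d 0 : ℤ) - ν₁) :=
          ⟨(da 1 : ℤ) - d 1, by push_cast [hν₁]; linarith⟩
        exact (hcop'.symm.dvd_of_dvd_mul_left hdvd')
      have := Int.natCast_dvd_natCast.mp (by
        rwa [Int.ofNat_sub hle] : (s:ℤ) ∣ ((d 0 - ν₁ : ℕ) : ℤ))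
      exact this
    · have hle : ν₂ ≤ d 1 := hminb d hd
      have : (r : ℤ) ∣ (d 1 : ℤ) - ν₂ := by
        have hdvd' : (r : ℤ) ∣ (s : ℤ) * ((d 1 : ℤ) - ν₂) :=
          ⟨(db 0 : ℤ) - d 0, by push_cast [hν₂]; linarith⟩
        exact (hcop'.dvd_of_dvd_mul_left hdvd')
      have := Int.natCast_dvd_natCast.mp (by
        rwa [Int.ofNat_sub hle] : (r:ℤ) ∣ ((d 1 - ν₂ : ℕ) : ℤ))
      exact this
  -- decomposition
  have hdecomp : ∀ d ∈ p.support, ∃ k j : ℕ,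
      d 0 = ν₁ + s * k ∧ d 1 = ν₂ + r * j ∧ r * ν₁ + s * ν₂ + r * s * (k + j) = q := by
    intro d hd
    obtain ⟨hd1, hd2⟩ := hdvd d hd
    obtain ⟨k, hk⟩ := hd1
    obtain ⟨j, hj⟩ := hd2
    have hle1 : ν₁ ≤ d 0 := hmina d hd
    have hle2 : ν₂ ≤ d 1 := hminb d hd
    have h0 : d 0 = ν₁ + s * k := by rw [← hk]; exact (Nat.add_sub_cancel' hle1).symm
    have h1 : d 1 = ν₂ + r * j := by rw [← hj]; exact (Nat.add_sub_cancel' hle2).symm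
    refine ⟨k, j, h0, h1, ?_⟩
    have hq' := key d hd
    rw [h0, h1] at hq'
    have hring : r * ν₁ + s * ν₂ + r * s * (k + j)
        = r * (ν₁ + s * k) + s * (ν₂ + r * j) := by ring
    exact hring.trans hq'
  obtain ⟨k₀, j₀, _, _, hn₀⟩ := hdecomp da hda
  set n : ℕ := k₀ + j₀ with hn
  have hform : ∀ d ∈ p.support, ∃ j ≤ n, d 0 = ν₁ + (n - j) * s ∧ d 1 = ν₂ + j * r := by
    intro d hd
    obtain ⟨k, j, h0, h1, hsum⟩ := hdecomp d hd
    have hrs : 0 < r * s := Nat.mul_pos hr hs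
    have hkj : k + j = n :=
      Nat.eq_of_mul_eq_mul_left hrs (Nat.add_left_cancel (hsum.trans hn₀.symm))
    have hk' : k = n - j := by omega
    refine ⟨j, by omega, ?_, by rw [h1, Nat.mul_comm]⟩
    rw [h0, hk', Nat.mul_comm]
  -- Step 3: the expansion.
  set e : ℕ → (Fin 2 →₀ ℕ) :=
    fun i => Finsupp.single 0 (ν₁ + (n - i) * s) + Finsupp.single 1 (ν₂ + i * r) with he
  have he0 : ∀ i, e i 0 = ν₁ + (n - i) * s := by
    intro i; simp [he, Finsupp.single_apply]
  have he1 : ∀ i, e i 1 = ν₂ + i * r := by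
    intro i; simp [he, Finsupp.single_apply]
  refine ⟨ν₁, ν₂, n, fun i => coeff (e i) p, fun x y => ?_⟩
  have hsub : p.support ⊆ (Finset.range (n + 1)).image e := by
    intro d hd
    obtain ⟨j, hjn, h0, h1⟩ := hform d hd
    refine Finset.mem_image.mpr ⟨j, Finset.mem_range.mpr (by omega), ?_⟩
    ext a
    fin_cases a
    · exact (he0 j).trans h0.symm
    · exact (he1 j).trans h1.symm
  have hinj : ∀ i ∈ Finset.range (n + 1), ∀ i' ∈ Finset.range (n + 1), e i = e i' → i = i' := by
    intro i _ i' _ hii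
    have h := congrArg (fun f : Fin 2 →₀ ℕ => f 1) hii
    simp only [he1] at h
    exact Nat.eq_of_mul_eq_mul_right hr (Nat.add_left_cancel h)
  have heval : eval ![x, y] p = ∑ d ∈ p.support, coeff d p * (x ^ d 0 * y ^ d 1) := by
    rw [eval_eq']
    refine Finset.sum_congr rfl fun d _ => ?_
    rw [Fin.prod_univ_two]
    simp
  rw [heval]
  rw [Finset.sum_subset hsub (fun d _ hd => by
    rw [notMem_support_iff.mp hd, zero_mul])]
  rw [Finset.sum_image hinj]
  rw [Finset.mul_sum]
  refine Finset.sum_congr rfl fun i _ => ?_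
  rw [he0, he1, pow_add, pow_add]
  ring
end

section
/- Every nonzero real mixed-homogeneous polynomial φ with φ(x,y) = ρ^{-q}φ(ρ^r x, ρ^s y) for all ρ>0 and gcd(r,s)=1 factors as φ(x,y) = x^{ν₁} y^{ν₂} ∏_{j=1}^{M} (x^s − λ_j y^r)^{n_j} · P(x^s, y^r), where ν₁, ν₂, M, n_j are nonnegative integers, the λ_j are nonzero reals, and P is a real homogeneous polynomial in two variables that vanishes only at the origin. -/
/-!
Comparing the coefficients of `p` with those of `p(2^r x, 2^s y)` shows that every monomial
`x^a y^b` of `p` has `r a + s b = q`. As `gcd(r, s) = 1`, all such `a` are congruent modulo `s`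
and all such `b` modulo `r`, so `p(x, y) = x^ν₁ y^ν₂ F(x^s, y^r)` where `F` is the
homogenization of a one-variable polynomial `Q`. Splitting off the real roots of `Q`, with the
root `0` contributing a power of `x^s`, leaves a factor without real roots, and the
homogenization of such a polynomial vanishes only at the origin.
-/

lemma Nat.mod_eq_mod_of_mul_add_mul_eq {r s a b a' b' : ℕ} (hcop : r.Coprime s)
    (h : r * a + s * b = r * a' + s * b') : a % s = a' % s := by
  have : r * a ≡ r * a' [MOD s] := by
    simpa [Nat.ModEq, Nat.add_mul_mod_self_left] using congrArg (· % s) h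
  exact Nat.ModEq.cancel_left_of_coprime hcop.symm this

lemma Multiset.exists_eq_map_range {α : Type*} [Nonempty α] (s : Multiset α) :
    ∃ f : ℕ → α, s = (Multiset.range (Multiset.card s)).map f := by
  induction s using Multiset.induction with
  | empty => exact ⟨fun _ => Classical.arbitrary α, by simp⟩
  | cons a s ih =>
    obtain ⟨f, hf⟩ := ih
    refine ⟨Function.update f (Multiset.card s) a, ?_⟩
    rw [Multiset.card_cons, Multiset.range_succ, Multiset.map_cons, Function.update_self]
    congr 1
    conv_lhs => rw [hf]
    refine Multiset.map_congr rfl fun j hj => ?_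
    rw [Function.update_of_ne (Multiset.mem_range.mp hj).ne]

namespace Polynomial

lemma homogenize_add_of_natDegree_le {R : Type*} [CommSemiring R] {p : R[X]} {n : ℕ}
    (hp : p.natDegree ≤ n) (k : ℕ) :
    p.homogenize (n + k) = p.homogenize n * MvPolynomial.X 1 ^ k := by
  simpa using homogenize_mul p 1 hp (natDegree_one.trans_le k.zero_le)

lemma homogenize_X_sub_C {R : Type*} [CommRing R] (c : R) :
    (X - C c).homogenize 1 = MvPolynomial.X 0 - MvPolynomial.C c * MvPolynomial.X 1 := by
  simp [homogenize_X one_ne_zero]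

lemma eval_homogenize_of_eq_zero {R : Type*} [CommSemiring R] (p : R[X]) (n : ℕ)
    {x : Fin 2 → R} (hx : x 1 = 0) :
    MvPolynomial.eval x (p.homogenize n) = p.coeff n * x 0 ^ n := by
  rw [homogenize, map_sum, Finset.sum_eq_single (n, 0)]
  · simp [MvPolynomial.eval_monomial, Finsupp.prod_fintype]
  · rintro ⟨k, l⟩ hkl hne
    obtain rfl : k + l = n := Finset.HasAntidiagonal.mem_antidiagonal.mp hkl
    have hl : l ≠ 0 := by rintro rfl; simp at hne
    simp [MvPolynomial.eval_monomial, Finsupp.prod_fintype, hx, hl]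
  · simp

variable {F : Type*} [Field F]

lemma eq_zero_of_eval_homogenize_natDegree_eq_zero {p : F[X]} (hp : ∀ x, ¬ p.IsRoot x)
    {u v : F} (h : MvPolynomial.eval ![u, v] (p.homogenize p.natDegree) = 0) :
    u = 0 ∧ v = 0 := by
  have hp0 : p ≠ 0 := by rintro rfl; exact hp 0 (by simp)
  by_cases hv : v = 0
  · subst hv
    rw [eval_homogenize_of_eq_zero _ _ rfl, coeff_natDegree] at h
    have hu := (mul_eq_zero.mp h).resolve_left (leadingCoeff_ne_zero.mpr hp0)
    simpa using (pow_eq_zero_iff'.mp hu).1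
  · rw [eval_homogenize le_rfl _ hv] at h
    exact absurd h (mul_ne_zero (hp _) (pow_ne_zero _ hv))

theorem exists_eq_X_pow_mul_prod_X_sub_C_mul {Q : F[X]} (hQ : Q ≠ 0) :
    ∃ (a M : ℕ) (lam : ℕ → F) (R : F[X]), (∀ j < M, lam j ≠ 0) ∧ (∀ x, ¬ R.IsRoot x) ∧
      Q.natDegree = a + M + R.natDegree ∧
      Q = X ^ a * (∏ j ∈ Finset.range M, (X - C (lam j))) * R := by
  obtain ⟨Q', hQQ', hXQ'⟩ := exists_eq_pow_rootMultiplicity_mul_and_not_dvd Q hQ 0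
  generalize Q.rootMultiplicity 0 = a at hQQ'
  rw [map_zero, sub_zero] at hQQ' hXQ'
  obtain ⟨R, hQ'R, hdeg, hR⟩ := exists_prod_multiset_X_sub_C_mul Q'
  obtain ⟨lam, hlam⟩ := Multiset.exists_eq_map_range Q'.roots
  generalize Multiset.card Q'.roots = M at hdeg hlam
  have hQ' : Q' ≠ 0 := by rintro rfl; simp at hXQ'
  have hR0 : R ≠ 0 := by rintro rfl; simp [eq_comm, hQ'] at hQ'R
  refine ⟨a, M, lam, R, fun j hj h0 => ?_, fun x hx => ?_, ?_, ?_⟩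
  · have : lam j ∈ Q'.roots := hlam ▸ Multiset.mem_map_of_mem _ (Multiset.mem_range.mpr hj)
    rw [h0, mem_roots hQ', IsRoot, ← coeff_zero_eq_eval_zero, ← X_dvd_iff] at this
    exact hXQ' this
  · simpa [hR] using (mem_roots hR0).mpr hx
  · rw [hQQ', natDegree_mul (by simp) hQ', ← hdeg, natDegree_X_pow, add_assoc]
  · rw [hQQ', ← hQ'R, hlam, Multiset.map_map, mul_assoc]
    rfl

theorem exists_homogenize_eq_X_pow_mul_prod_mul {Q : F[X]} (hQ : Q ≠ 0) {K : ℕ}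
    (hK : Q.natDegree ≤ K) :
    ∃ (a b M : ℕ) (lam : ℕ → F) (R : F[X]), (∀ j < M, lam j ≠ 0) ∧ (∀ x, ¬ R.IsRoot x) ∧
      Q.homogenize K = MvPolynomial.X 0 ^ a * MvPolynomial.X 1 ^ b *
        (∏ j ∈ Finset.range M, (MvPolynomial.X 0 - MvPolynomial.C (lam j) * MvPolynomial.X 1)) *
        R.homogenize R.natDegree := by
  obtain ⟨a, M, lam, R, hlam, hR, hdeg, rfl⟩ := exists_eq_X_pow_mul_prod_X_sub_C_mul hQ
  obtain ⟨b, rfl⟩ := Nat.exists_eq_add_of_le hK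
  refine ⟨a, b, M, lam, R, hlam, hR, ?_⟩
  have hprod : (∏ j ∈ Finset.range M, (X - C (lam j))).homogenize M =
      ∏ j ∈ Finset.range M, (MvPolynomial.X 0 - MvPolynomial.C (lam j) * MvPolynomial.X 1) := by
    simpa [homogenize_X_sub_C] using homogenize_finsetProd (s := Finset.range M)
      (n := fun _ => 1) fun j _ => (natDegree_X_sub_C (lam j)).le
  have hprod_deg : (∏ j ∈ Finset.range M, (X - C (lam j))).natDegree ≤ M :=
    (natDegree_prod_le _ _).trans (by simp)
  have hXprod_deg : (X ^ a * ∏ j ∈ Finset.range M, (X - C (lam j))).natDegree ≤ a + M :=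
    natDegree_mul_le.trans (add_le_add (natDegree_X_pow_le a) hprod_deg)
  rw [homogenize_add_of_natDegree_le le_rfl, hdeg, homogenize_mul _ _ hXprod_deg le_rfl,
    homogenize_mul _ _ (natDegree_X_pow_le a) hprod_deg, homogenize_X_pow le_rfl, hprod,
    Nat.sub_self, pow_zero, mul_one]
  ring

end Polynomial

namespace MvPolynomial

variable {R σ : Type*} [CommRing R]

lemma aeval_C_pow_mul_X_monomial (w : σ → ℕ) (ρ : R) (m : σ →₀ ℕ) (a : R) :
    aeval (fun i => C (ρ ^ w i) * X i) (monomial m a) =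
      monomial m (ρ ^ Finsupp.weight w m * a) := by
  rw [aeval_monomial, Finsupp.weight_apply, Finsupp.sum, ← Finset.prod_pow_eq_pow_sum,
    monomial_eq, Finsupp.prod, Finsupp.prod]
  simp only [mul_pow, ← C_pow, ← pow_mul', Finset.prod_mul_distrib, ← map_prod, algebraMap_eq,
    C_mul, smul_eq_mul]
  ring

lemma coeff_aeval_C_pow_mul_X (w : σ → ℕ) (ρ : R) (p : MvPolynomial σ R) (m : σ →₀ ℕ) :
    coeff m (aeval (fun i => C (ρ ^ w i) * X i) p) = ρ ^ Finsupp.weight w m * coeff m p := by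
  classical
  induction p using induction_on' with
  | monomial d a =>
    rw [aeval_C_pow_mul_X_monomial, coeff_monomial, coeff_monomial]
    split_ifs with h <;> simp [h]
  | add p q hp hq => rw [map_add, coeff_add, hp, hq, coeff_add, mul_add]

lemma eval_aeval_C_mul_X (c x : σ → R) (p : MvPolynomial σ R) :
    eval x (aeval (fun i => C (c i) * X i) p) = eval (fun i => c i * x i) p := by
  rw [aeval_eq_bind₁, eval, eval₂Hom_bind₁]
  simp

theorem isWeightedHomogeneous_of_eval_pow_mul [IsDomain R] [Infinite R] {w : σ → ℕ} {ρ : R}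
    (hρ : Function.Injective (ρ ^ · : ℕ → R)) {p : MvPolynomial σ R} {n : ℕ}
    (h : ∀ x : σ → R, eval (fun i => ρ ^ w i * x i) p = ρ ^ n * eval x p) :
    IsWeightedHomogeneous w p n := by
  have hscale : aeval (fun i => C (ρ ^ w i) * X i) p = C (ρ ^ n) * p :=
    funext fun x => by rw [eval_aeval_C_mul_X, h, eval_mul, eval_C]
  intro m hm
  have hcoeff := congrArg (coeff m) hscale
  rw [coeff_aeval_C_pow_mul_X, coeff_C_mul] at hcoeff
  exact hρ (mul_right_cancel₀ hm hcoeff)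

open Polynomial in
theorem IsWeightedHomogeneous.exists_eval_eq_mul_eval_homogenize {r s q : ℕ}
    (hr : 0 < r) (hs : 0 < s) (hcop : r.Coprime s) {p : MvPolynomial (Fin 2) R} (hp : p ≠ 0)
    (hpq : IsWeightedHomogeneous ![r, s] p q) :
    ∃ (ν₁ ν₂ K : ℕ) (Q : R[X]), Q.natDegree ≤ K ∧
      ∀ x y : R, eval ![x, y] p = x ^ ν₁ * y ^ ν₂ * eval ![x ^ s, y ^ r] (Q.homogenize K) := by
  have hw : ∀ m ∈ p.support, r * m 0 + s * m 1 = q := fun m hm => by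
    simpa [Finsupp.weight_eq_sum, mul_comm] using hpq (mem_support_iff.mp hm)
  obtain ⟨m₀, hm₀⟩ := support_nonempty.mpr hp
  have hslice : ∀ m ∈ p.support, m 0 % s = m₀ 0 % s ∧ m 1 % r = m₀ 1 % r ∧
      m 0 / s + m 1 / r = m₀ 0 / s + m₀ 1 / r := by
    intro m hm
    have h := (hw m hm).trans (hw m₀ hm₀).symm
    have h0 := Nat.mod_eq_mod_of_mul_add_mul_eq hcop h
    have h1 := Nat.mod_eq_mod_of_mul_add_mul_eq hcop.symm
      (by linarith : s * m 1 + r * m 0 = s * m₀ 1 + r * m₀ 0)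
    refine ⟨h0, h1, Nat.eq_of_mul_eq_mul_left (Nat.mul_pos hr hs) ?_⟩
    rw [← Nat.mod_add_div (m 0) s, ← Nat.mod_add_div (m 1) r, ← Nat.mod_add_div (m₀ 0) s,
      ← Nat.mod_add_div (m₀ 1) r, h0, h1] at h
    linarith
  refine ⟨m₀ 0 % s, m₀ 1 % r, m₀ 0 / s + m₀ 1 / r,
    ∑ m ∈ p.support, Polynomial.monomial (m 0 / s) (coeff m p), ?_, fun x y => ?_⟩
  · exact natDegree_sum_le_of_forall_le _ _ fun m hm =>
      (natDegree_monomial_le _).trans ((hslice m hm).2.2 ▸ Nat.le_add_right _ _)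
  · rw [eval_eq', homogenize_finsetSum, map_sum, Finset.mul_sum]
    refine Finset.sum_congr rfl fun m hm => ?_
    obtain ⟨h0, h1, hK⟩ := hslice m hm
    rw [homogenize_monomial (hK ▸ Nat.le_add_right _ _), eval_monomial,
      Finsupp.prod_fintype _ _ (by simp), Fin.prod_univ_two, Fin.prod_univ_two]
    simp only [Matrix.cons_val_zero, Matrix.cons_val_one, Finsupp.update_apply, if_true,
      Fin.zero_ne_one, if_false, Finsupp.single_eq_same]
    rw [show m₀ 0 / s + m₀ 1 / r - m 0 / s = m 1 / r by rw [← hK, Nat.add_sub_cancel_left],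
      ← h0, ← h1, ← pow_mul, ← pow_mul]
    conv_lhs => rw [← Nat.mod_add_div (m 0) s, ← Nat.mod_add_div (m 1) r]
    ring

end MvPolynomial

open MvPolynomial in
theorem mixed_homogeneous_factorization_general
    (q r s : ℕ) (hr : 0 < r) (hs : 0 < s) (hcop : Nat.Coprime r s)
    (p : MvPolynomial (Fin 2) ℝ) (hp : p ≠ 0)
    (hhom : ∀ (x y ρ : ℝ), 0 < ρ →
      eval ![x, y] p = ρ ^ (-(q : ℤ)) * eval ![ρ ^ r * x, ρ ^ s * y] p) :
    ∃ (ν₁ ν₂ M : ℕ) (nn : ℕ → ℕ) (lam : ℕ → ℝ) (P : MvPolynomial (Fin 2) ℝ) (d : ℕ),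
      (∀ j < M, lam j ≠ 0) ∧
      P.IsHomogeneous d ∧
      (∀ u v : ℝ, eval ![u, v] P = 0 → u = 0 ∧ v = 0) ∧
      (∀ x y : ℝ,
        eval ![x, y] p
          = x ^ ν₁ * y ^ ν₂ *
              (∏ j ∈ Finset.range M, (x ^ s - lam j * y ^ r) ^ (nn j)) *
              eval ![x ^ s, y ^ r] P) := by
  have heta (x : Fin 2 → ℝ) : x = ![x 0, x 1] := by ext i; fin_cases i <;> rfl
  have hw : IsWeightedHomogeneous ![r, s] p q := by
    refine isWeightedHomogeneous_of_eval_pow_mul (ρ := (2 : ℝ))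
      (pow_right_injective₀ two_pos (by norm_num)) fun x => ?_
    have h2x : (fun i => (2 : ℝ) ^ ![r, s] i * x i) = ![2 ^ r * x 0, 2 ^ s * x 1] := by
      ext i; fin_cases i <;> rfl
    have hx := hhom (x 0) (x 1) 2 two_pos
    rw [← heta x, zpow_neg, zpow_natCast] at hx
    rw [h2x, hx]
    field_simp
  obtain ⟨ν₁, ν₂, K, Q, hQK, hpQ⟩ := hw.exists_eval_eq_mul_eval_homogenize hr hs hcop hp
  have hQ : Q ≠ 0 := by
    rintro rfl
    exact hp (MvPolynomial.funext fun x => by simpa [← heta] using hpQ (x 0) (x 1))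
  obtain ⟨a, b, M, lam, R, hlam, hR, hQR⟩ :=
    Polynomial.exists_homogenize_eq_X_pow_mul_prod_mul hQ hQK
  refine ⟨ν₁ + s * a, ν₂ + r * b, M, fun _ => 1, lam, R.homogenize R.natDegree, R.natDegree,
    hlam, R.isHomogeneous_homogenize,
    fun u v => Polynomial.eq_zero_of_eval_homogenize_natDegree_eq_zero hR, fun x y => ?_⟩
  rw [hpQ, hQR]
  simp [pow_add, pow_mul]
  ring

open MvPolynomial in
theorem mixed_homogeneous_factorization
    (q r s : ℕ) (hq : 0 < q) (hr : 0 < r) (hs : 0 < s) (hcop : Nat.Coprime r s)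
    (p : MvPolynomial (Fin 2) ℝ) (hp : p ≠ 0)
    (hhom : ∀ (x y ρ : ℝ), 0 < ρ →
      eval ![x, y] p = ρ ^ (-(q : ℤ)) * eval ![ρ ^ r * x, ρ ^ s * y] p) :
    ∃ (ν₁ ν₂ M : ℕ) (nn : ℕ → ℕ) (lam : ℕ → ℝ) (P : MvPolynomial (Fin 2) ℝ) (d : ℕ),
      (∀ j < M, lam j ≠ 0) ∧
      P.IsHomogeneous d ∧
      (∀ u v : ℝ, eval ![u, v] P = 0 → u = 0 ∧ v = 0) ∧
      (∀ x y : ℝ,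
        eval ![x, y] p
          = x ^ ν₁ * y ^ ν₂ *
              (∏ j ∈ Finset.range M, (x ^ s - lam j * y ^ r) ^ (nn j)) *
              eval ![x ^ s, y ^ r] P) :=
  mixed_homogeneous_factorization_general q r s hr hs hcop p hp hhom
end
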